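/- arXiv:2106.12508 — 3 statements merged into one kernel-verified Lean document; each statement's English description precedes it below -/
import Mathlib

section
/- If a tripartite density matrix is a product of a bipartite state and a single-system state, ρ_ABC = σ_AB ⊗ τ_C (where σ_AB and τ_C are density matrices on the AB system and the C system respectively), then its convoluted metric vanishes: M_AB = 0. -/
open Matrix Kronecker
open scoped ComplexOrder

noncomputable section

/-- The von Neumann entropy of a matrix: `S(ρ) = -∑ᵢ λᵢ log λᵢ` where `λᵢ` are the
eigenvalues of `ρ` (defined for Hermitian matrices; `0` otherwise, and with the
convention `0 log 0 = 0` built into `Real.log 0 = 0`). -/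
def vN {n : Type*} [Fintype n] [DecidableEq n] (ρ : Matrix n n ℂ) : ℝ :=
  if h : ρ.IsHermitian then -∑ i, h.eigenvalues i * Real.log (h.eigenvalues i) else 0

/-- A density matrix: positive semidefinite with unit trace. -/
def IsDensityMatrix {n : Type*} [Fintype n] (ρ : Matrix n n ℂ) : Prop :=
  ρ.PosSemidef ∧ ρ.trace = 1

section Tripartite

variable {A B C : Type*} [Fintype A] [Fintype B] [Fintype C]
  [DecidableEq A] [DecidableEq B] [DecidableEq C]

/-- Reduced density matrix `ρ_AB` (partial trace over `C`). -/
def rAB (ρ : Matrix ((A × B) × C) ((A × B) × C) ℂ) : Matrix (A × B) (A × B) ℂ :=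
  fun x y => ∑ c : C, ρ (x, c) (y, c)

/-- Reduced density matrix `ρ_AC` (partial trace over `B`). -/
def rAC (ρ : Matrix ((A × B) × C) ((A × B) × C) ℂ) : Matrix (A × C) (A × C) ℂ :=
  fun x y => ∑ b : B, ρ ((x.1, b), x.2) ((y.1, b), y.2)

/-- Reduced density matrix `ρ_BC` (partial trace over `A`). -/
def rBC (ρ : Matrix ((A × B) × C) ((A × B) × C) ℂ) : Matrix (B × C) (B × C) ℂ :=
  fun x y => ∑ a : A, ρ ((a, x.1), x.2) ((a, y.1), y.2)

/-- Reduced density matrix `ρ_A` (partial trace over `B` and `C`). -/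
def rA (ρ : Matrix ((A × B) × C) ((A × B) × C) ℂ) : Matrix A A ℂ :=
  fun a a' => ∑ b : B, ∑ c : C, ρ ((a, b), c) ((a', b), c)

/-- Reduced density matrix `ρ_B` (partial trace over `A` and `C`). -/
def rB (ρ : Matrix ((A × B) × C) ((A × B) × C) ℂ) : Matrix B B ℂ :=
  fun b b' => ∑ a : A, ∑ c : C, ρ ((a, b), c) ((a, b'), c)

end Tripartite

open Polynomial

lemma charpoly_conj' {n : Type*} [Fintype n] [DecidableEq n] (U V M : Matrix n n ℂ)
    (h : U * V = 1) : (U * M * V).charpoly = M.charpoly := by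
  have hcm : ∀ N : Matrix n n ℂ, charmatrix N = (X : ℂ[X]) • (1 : Matrix n n ℂ[X]) - N.map C := by
    intro N
    ext i j
    by_cases hij : i = j <;>
      simp [hij, charmatrix_apply, Matrix.one_apply, Matrix.diagonal_apply]
  have key : charmatrix (U * M * V) = U.map C * charmatrix M * V.map C := by
    have hUV : U.map (C : ℂ →+* ℂ[X]) * V.map C = 1 := by
      rw [← Matrix.map_mul, h, Matrix.map_one _ (map_zero C) (map_one C)]
    rw [hcm, hcm, mul_sub, sub_mul, Matrix.mul_smul, mul_one, Matrix.smul_mul, hUV,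
      ← Matrix.map_mul, ← Matrix.map_mul]
  have hdet : (U.map (C : ℂ →+* ℂ[X])).det * (V.map C).det = 1 := by
    rw [← det_mul, ← Matrix.map_mul, h, Matrix.map_one _ (map_zero C) (map_one C), det_one]
  rw [charpoly, charpoly, key, det_mul, det_mul]
  ring_nf
  rw [mul_comm, ← mul_assoc, mul_comm (V.map C).det, hdet, one_mul]

lemma charpoly_diagonal' {n : Type*} [Fintype n] [DecidableEq n] (d : n → ℂ) :
    (Matrix.diagonal d).charpoly = ∏ i, (X - C (d i)) := by
  have : charmatrix (Matrix.diagonal d) = Matrix.diagonal fun i => (X : ℂ[X]) - C (d i) := by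
    ext i j
    by_cases hij : i = j
    · subst hij; simp [charmatrix_apply_eq]
    · simp [charmatrix_apply_ne _ _ _ hij, Matrix.diagonal_apply_ne _ hij,
        Matrix.diagonal_apply_ne _ hij]
  rw [charpoly, this, det_diagonal]

lemma charpoly_hermitian' {n : Type*} [Fintype n] [DecidableEq n] {A : Matrix n n ℂ}
    (hA : A.IsHermitian) : A.charpoly = ∏ i, (X - C ((hA.eigenvalues i : ℝ) : ℂ)) := by
  have hs := hA.spectral_theorem
  have h1 : (hA.eigenvectorUnitary : Matrix n n ℂ) * (star hA.eigenvectorUnitary : Matrix n n ℂ)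
      = 1 := by
    simpa using unitary.coe_mul_star_self hA.eigenvectorUnitary
  calc A.charpoly
      = ((hA.eigenvectorUnitary : Matrix n n ℂ) *
          Matrix.diagonal (RCLike.ofReal ∘ hA.eigenvalues) *
          (star hA.eigenvectorUnitary : Matrix n n ℂ)).charpoly := by congr 1
    _ = (Matrix.diagonal (RCLike.ofReal ∘ hA.eigenvalues)).charpoly := charpoly_conj' _ _ _ h1
    _ = ∏ i, (X - C ((hA.eigenvalues i : ℝ) : ℂ)) := by
        rw [charpoly_diagonal']; rfl

lemma roots_charpoly_hermitian {n : Type*} [Fintype n] [DecidableEq n] {A : Matrix n n ℂ}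
    (hA : A.IsHermitian) :
    A.charpoly.roots = Finset.univ.val.map fun i => ((hA.eigenvalues i : ℝ) : ℂ) := by
  rw [charpoly_hermitian' hA]
  rw [Finset.prod_eq_multiset_prod]
  rw [show (Multiset.map (fun i => X - C ((hA.eigenvalues i : ℝ) : ℂ)) Finset.univ.val)
      = (Finset.univ.val.map fun i => ((hA.eigenvalues i : ℝ) : ℂ)).map (fun a => X - C a) by
    rw [Multiset.map_map]; rfl]
  exact roots_multiset_prod_X_sub_C _

/-- If a Hermitian matrix has the charpoly of the real diagonal family `d`,
then sums of functions of its eigenvalues agree with sums over `d`. -/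
lemma sum_eigenvalues_eq {n m : Type*} [Fintype n] [DecidableEq n] [Fintype m]
    {A : Matrix n n ℂ} (hA : A.IsHermitian) (d : m → ℝ)
    (h : A.charpoly = ∏ i, (X - C ((d i : ℝ) : ℂ))) (φ : ℝ → ℝ) :
    ∑ i, φ (hA.eigenvalues i) = ∑ j, φ (d j) := by
  have hroots : (Finset.univ.val.map fun i => ((hA.eigenvalues i : ℝ) : ℂ))
      = Finset.univ.val.map fun j => ((d j : ℝ) : ℂ) := by
    rw [← roots_charpoly_hermitian hA, h, Finset.prod_eq_multiset_prod]
    rw [show (Multiset.map (fun j => X - C ((d j : ℝ) : ℂ)) Finset.univ.val)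
        = (Finset.univ.val.map fun j => ((d j : ℝ) : ℂ)).map (fun a => X - C a) by
      rw [Multiset.map_map]; rfl]
    exact roots_multiset_prod_X_sub_C _
  have hm : Finset.univ.val.map hA.eigenvalues = Finset.univ.val.map d := by
    apply Multiset.map_injective (f := (fun x : ℝ => (x : ℂ))) Complex.ofReal_injective
    simpa [Multiset.map_map, Function.comp] using hroots
  calc ∑ i, φ (hA.eigenvalues i) = ((Finset.univ.val.map hA.eigenvalues).map φ).sum := by
        rw [Multiset.map_map]; rfl
    _ = ((Finset.univ.val.map d).map φ).sum := by rw [hm]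
    _ = ∑ j, φ (d j) := by rw [Multiset.map_map]; rfl

lemma kronecker_isHermitian {m p : Type*} [Fintype m] [Fintype p]
    {M : Matrix m m ℂ} {N : Matrix p p ℂ} (hM : M.IsHermitian) (hN : N.IsHermitian) :
    (M ⊗ₖ N).IsHermitian := by
  ext ⟨i, j⟩ ⟨k, l⟩
  simp only [conjTranspose_apply, kroneckerMap_apply, star_mul', mul_comm,
    hM.apply, hN.apply]

lemma sum_eigenvalues_eq_one {n : Type*} [Fintype n] [DecidableEq n] {M : Matrix n n ℂ}
    (hM : IsDensityMatrix M) : ∑ i, hM.1.1.eigenvalues i = 1 := by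
  have hA := hM.1.1
  have htr : M.trace = ∑ i, ((hA.eigenvalues i : ℝ) : ℂ) := by
    conv_lhs => rw [show M = (hA.eigenvectorUnitary : Matrix n n ℂ) * Matrix.diagonal (RCLike.ofReal ∘ hA.eigenvalues) * (star hA.eigenvectorUnitary : Matrix n n ℂ) from hA.spectral_theorem]
    rw [Matrix.trace_mul_cycle]
    have h1 : (star hA.eigenvectorUnitary : Matrix n n ℂ) *
        (hA.eigenvectorUnitary : Matrix n n ℂ) = 1 := by
      simpa using Unitary.coe_star_mul_self hA.eigenvectorUnitary
    rw [h1, one_mul, Matrix.trace_diagonal]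
    rfl
  have := hM.2
  rw [htr] at this
  have : ((∑ i, hA.eigenvalues i : ℝ) : ℂ) = ((1 : ℝ) : ℂ) := by push_cast; simpa using this
  exact_mod_cast this

lemma charpoly_kronecker {m p : Type*} [Fintype m] [Fintype p] [DecidableEq m] [DecidableEq p]
    {M : Matrix m m ℂ} {N : Matrix p p ℂ} (hM : M.IsHermitian) (hN : N.IsHermitian) :
    (M ⊗ₖ N).charpoly
      = ∏ i : m × p, (X - C (((hM.eigenvalues i.1 * hN.eigenvalues i.2 : ℝ)) : ℂ)) := by
  have hU : (hM.eigenvectorUnitary : Matrix m m ℂ) * (star hM.eigenvectorUnitary : Matrix m m ℂ) = 1 := by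
    simpa using unitary.coe_mul_star_self hM.eigenvectorUnitary
  have hV : (hN.eigenvectorUnitary : Matrix p p ℂ) * (star hN.eigenvectorUnitary : Matrix p p ℂ) = 1 := by
    simpa using unitary.coe_mul_star_self hN.eigenvectorUnitary
  set U := (hM.eigenvectorUnitary : Matrix m m ℂ)
  set V := (hN.eigenvectorUnitary : Matrix p p ℂ)
  set D := Matrix.diagonal (RCLike.ofReal ∘ hM.eigenvalues : m → ℂ)
  set E := Matrix.diagonal (RCLike.ofReal ∘ hN.eigenvalues : p → ℂ)
  have hMs : M = U * D * star U := hM.spectral_theorem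
  have hNs : N = V * E * star V := hN.spectral_theorem
  have hkey : M ⊗ₖ N = (U ⊗ₖ V) * (D ⊗ₖ E) * (star U ⊗ₖ star V) := by
    rw [hMs, hNs, ← Matrix.mul_kronecker_mul, ← Matrix.mul_kronecker_mul]
  have h1 : (U ⊗ₖ V) * (star U ⊗ₖ star V) = 1 := by
    rw [← Matrix.mul_kronecker_mul]
    rw [hU, hV, Matrix.one_kronecker_one]
  rw [hkey, charpoly_conj' _ _ _ h1]
  have hDE : D ⊗ₖ E = Matrix.diagonal
      (fun i : m × p => ((hM.eigenvalues i.1 * hN.eigenvalues i.2 : ℝ) : ℂ)) := by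
    rw [Matrix.diagonal_kronecker_diagonal]
    congr 1
    ext i
    push_cast
    rfl
  rw [hDE, charpoly_diagonal']

lemma entropy_term_mul {a b : ℝ} (ha : 0 ≤ a) (hb : 0 ≤ b) :
    a * b * Real.log (a * b) = b * (a * Real.log a) + a * (b * Real.log b) := by
  rcases eq_or_lt_of_le ha with h | h
  · simp [← h]
  rcases eq_or_lt_of_le hb with h' | h'
  · simp [← h']
  rw [Real.log_mul h.ne' h'.ne']
  ring

lemma vN_kronecker {m p : Type*} [Fintype m] [Fintype p] [DecidableEq m] [DecidableEq p]
    {M : Matrix m m ℂ} {N : Matrix p p ℂ} (hM : IsDensityMatrix M) (hN : IsDensityMatrix N) :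
    vN (M ⊗ₖ N) = vN M + vN N := by
  have hMh := hM.1.1
  have hNh := hN.1.1
  have hK : (M ⊗ₖ N).IsHermitian := kronecker_isHermitian hMh hNh
  rw [vN, vN, vN, dif_pos hK, dif_pos hMh, dif_pos hNh]
  have hsum := sum_eigenvalues_eq hK (fun i : m × p => hMh.eigenvalues i.1 * hNh.eigenvalues i.2)
    (charpoly_kronecker hMh hNh) (fun x => x * Real.log x)
  rw [hsum]
  have h1 : ∑ i, hMh.eigenvalues i = 1 := sum_eigenvalues_eq_one hM
  have h2 : ∑ i, hNh.eigenvalues i = 1 := sum_eigenvalues_eq_one hN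
  rw [Fintype.sum_prod_type]
  have : ∀ i : m, ∑ j : p,
      hMh.eigenvalues i * hNh.eigenvalues j * Real.log (hMh.eigenvalues i * hNh.eigenvalues j)
      = hMh.eigenvalues i * Real.log (hMh.eigenvalues i)
        + hMh.eigenvalues i * ∑ j, hNh.eigenvalues j * Real.log (hNh.eigenvalues j) := by
    intro i
    rw [Finset.sum_congr rfl fun j _ => entropy_term_mul (hM.1.eigenvalues_nonneg i)
      (hN.1.eigenvalues_nonneg j)]
    rw [Finset.sum_add_distrib, ← Finset.sum_mul, ← Finset.mul_sum, h2, one_mul]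
  rw [Finset.sum_congr rfl fun i _ => this i, Finset.sum_add_distrib, ← Finset.sum_mul, h1,
    one_mul]
  ring

def ptB {A B : Type*} [Fintype B] (σ : Matrix (A × B) (A × B) ℂ) : Matrix A A ℂ :=
  fun a a' => ∑ b : B, σ (a, b) (a', b)

def ptA {A B : Type*} [Fintype A] (σ : Matrix (A × B) (A × B) ℂ) : Matrix B B ℂ :=
  fun b b' => ∑ a : A, σ (a, b) (a, b')


set_option maxHeartbeats 1000000 in
lemma ptB_isDensityMatrix {A B : Type*} [Fintype A] [Fintype B] [DecidableEq A] [DecidableEq B]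
    {σ : Matrix (A × B) (A × B) ℂ} (hσ : IsDensityMatrix σ) : IsDensityMatrix (ptB σ) := by
  refine ⟨posSemidef_iff_dotProduct_mulVec.mpr ⟨?_, ?_⟩, ?_⟩
  · ext a a'
    simp only [conjTranspose_apply, ptB, star_sum]
    exact Finset.sum_congr rfl fun b _ => hσ.1.1.apply _ _
  · intro v
    have hw : ∀ b : B, dotProduct (star fun q : A × B => if q.2 = b then v q.1 else 0)
        (σ *ᵥ fun q : A × B => if q.2 = b then v q.1 else 0)
        = ∑ a, ∑ a', star (v a) * (σ (a, b) (a', b) * v a') := by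
      intro b
      simp [dotProduct, mulVec, Fintype.sum_prod_type, apply_ite star, ite_mul, mul_ite,
        mul_zero, zero_mul, Finset.mul_sum, Finset.sum_ite_eq, Finset.sum_ite_eq']
    have key : dotProduct (star v) (ptB σ *ᵥ v)
        = ∑ b : B, dotProduct (star fun q : A × B => if q.2 = b then v q.1 else 0)
            (σ *ᵥ fun q : A × B => if q.2 = b then v q.1 else 0) := by
      rw [Finset.sum_congr rfl fun b _ => hw b]
      simp only [dotProduct, mulVec, ptB, Pi.star_apply]
      simp only [Finset.sum_mul, Finset.mul_sum, mul_assoc]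
      rw [show (∑ x : A, ∑ x1 : A, ∑ i : B, star (v x) * (σ (x, i) (x1, i) * v x1))
          = ∑ x : A, ∑ i : B, ∑ x1 : A, star (v x) * (σ (x, i) (x1, i) * v x1) from
        Finset.sum_congr rfl fun _ _ => Finset.sum_comm]
      exact Finset.sum_comm
    rw [key]
    exact Finset.sum_nonneg fun b _ => hσ.1.dotProduct_mulVec_nonneg _
  · have : (ptB σ).trace = σ.trace := by
      simp [Matrix.trace, ptB, Matrix.diag, Fintype.sum_prod_type]
    rw [this, hσ.2]

set_option maxHeartbeats 1000000 in
lemma ptA_isDensityMatrix {A B : Type*} [Fintype A] [Fintype B] [DecidableEq A] [DecidableEq B]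
    {σ : Matrix (A × B) (A × B) ℂ} (hσ : IsDensityMatrix σ) : IsDensityMatrix (ptA σ) := by
  refine ⟨posSemidef_iff_dotProduct_mulVec.mpr ⟨?_, ?_⟩, ?_⟩
  · ext b b'
    simp only [conjTranspose_apply, ptA, star_sum]
    exact Finset.sum_congr rfl fun a _ => hσ.1.1.apply _ _
  · intro v
    have hw : ∀ a : A, dotProduct (star fun q : A × B => if q.1 = a then v q.2 else 0)
        (σ *ᵥ fun q : A × B => if q.1 = a then v q.2 else 0)
        = ∑ b, ∑ b', star (v b) * (σ (a, b) (a, b') * v b') := by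
      intro a
      simp [dotProduct, mulVec, Fintype.sum_prod_type, apply_ite star, ite_mul, mul_ite,
        mul_zero, zero_mul, Finset.mul_sum, Finset.sum_ite_eq, Finset.sum_ite_eq']
    have key : dotProduct (star v) (ptA σ *ᵥ v)
        = ∑ a : A, dotProduct (star fun q : A × B => if q.1 = a then v q.2 else 0)
            (σ *ᵥ fun q : A × B => if q.1 = a then v q.2 else 0) := by
      rw [Finset.sum_congr rfl fun a _ => hw a]
      simp only [dotProduct, mulVec, ptA, Pi.star_apply]
      simp only [Finset.sum_mul, Finset.mul_sum, mul_assoc]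
      rw [show (∑ x : B, ∑ x1 : B, ∑ i : A, star (v x) * (σ (i, x) (i, x1) * v x1))
          = ∑ x : B, ∑ i : A, ∑ x1 : B, star (v x) * (σ (i, x) (i, x1) * v x1) from
        Finset.sum_congr rfl fun _ _ => Finset.sum_comm]
      exact Finset.sum_comm
    rw [key]
    exact Finset.sum_nonneg fun a _ => hσ.1.dotProduct_mulVec_nonneg _
  · have : (ptA σ).trace = σ.trace := by
      have h1 : σ.trace = ∑ a : A, ∑ b : B, σ (a, b) (a, b) := by
        rw [Matrix.trace]; exact Fintype.sum_prod_type _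
      rw [h1]
      exact Finset.sum_comm
    rw [this, hσ.2]


/-- If a tripartite density matrix is a product `ρ_ABC = σ_AB ⊗ τ_C` of a bipartite density
matrix and a single-system density matrix, then its convoluted metric vanishes:
`M_AB = 2S(ρ_AB) + S(ρ_AC) + S(ρ_BC) − S(ρ_A) − S(ρ_B) − 2S(ρ_ABC) = 0`. -/
theorem convoluted_metric_vanishes_of_product
    {A B C : Type*} [Fintype A] [Fintype B] [Fintype C]
    [DecidableEq A] [DecidableEq B] [DecidableEq C]
    (σ : Matrix (A × B) (A × B) ℂ) (τ : Matrix C C ℂ)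
    (hσ : IsDensityMatrix σ) (hτ : IsDensityMatrix τ)
    (ρ : Matrix ((A × B) × C) ((A × B) × C) ℂ) (hρ : ρ = σ ⊗ₖ τ) :
    2 * vN (rAB ρ) + vN (rAC ρ) + vN (rBC ρ) - vN (rA ρ) - vN (rB ρ) - 2 * vN ρ = 0 := by
  subst hρ
  have htrτ : ∑ c : C, τ c c = 1 := hτ.2
  have hAB : rAB (σ ⊗ₖ τ) = σ := by
    ext x y
    rw [rAB]
    simp only [kroneckerMap_apply]
    rw [← Finset.mul_sum, htrτ, mul_one]
  have hA : rA (σ ⊗ₖ τ) = ptB σ := by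
    ext a a'
    rw [rA, ptB]
    refine Finset.sum_congr rfl fun b _ => ?_
    simp only [kroneckerMap_apply]
    rw [← Finset.mul_sum, htrτ, mul_one]
  have hB : rB (σ ⊗ₖ τ) = ptA σ := by
    ext b b'
    rw [rB, ptA]
    refine Finset.sum_congr rfl fun a _ => ?_
    simp only [kroneckerMap_apply]
    rw [← Finset.mul_sum, htrτ, mul_one]
  have hAC : rAC (σ ⊗ₖ τ) = ptB σ ⊗ₖ τ := by
    ext x y
    simp only [rAC, ptB, kroneckerMap_apply]
    rw [Finset.sum_mul]
  have hBC : rBC (σ ⊗ₖ τ) = ptA σ ⊗ₖ τ := by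
    ext x y
    simp only [rBC, ptA, kroneckerMap_apply]
    rw [Finset.sum_mul]
  rw [hAB, hA, hB, hAC, hBC,
    vN_kronecker hσ hτ,
    vN_kronecker (ptB_isDensityMatrix hσ) hτ,
    vN_kronecker (ptA_isDensityMatrix hσ) hτ]
  ring
end
end

section
/- For any four-partite density matrix ρ_{A1A2A3A4}, the convoluted area satisfies the identity ²M_{A1A2A3} = [I(A1;A2A3) + I(A3;A1A2A4) − S(ρ_{A1}) − S(ρ_{A3})]·I(A2;A4|A1A3) + [I(A3;A1A2) + I(A2;A1A3A4) − S(ρ_{A3}) − S(ρ_{A2})]·I(A1;A4|A2A3) + [I(A2;A1A3) + I(A1;A2A3A4) − S(ρ_{A2}) − S(ρ_{A1})]·I(A3;A4|A1A2), where I(X;Y) := S(ρ_X) + S(ρ_Y) − S(ρ_XY) and I(X;Z|Y) := S(ρ_XY) + S(ρ_YZ) − S(ρ_XYZ) − S(ρ_Y). -/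
open Matrix Kronecker
open scoped ComplexOrder

noncomputable section

section Quadripartite

variable {A1 A2 A3 A4 : Type*} [Fintype A1] [Fintype A2] [Fintype A3] [Fintype A4]
  [DecidableEq A1] [DecidableEq A2] [DecidableEq A3] [DecidableEq A4]

/-- Reduced density matrix `ρ_{A1}`. -/
def r1 (ρ : Matrix (A1 × A2 × A3 × A4) (A1 × A2 × A3 × A4) ℂ) : Matrix A1 A1 ℂ :=
  fun a a' => ∑ b : A2, ∑ c : A3, ∑ d : A4, ρ (a, b, c, d) (a', b, c, d)

/-- Reduced density matrix `ρ_{A2}`. -/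
def r2 (ρ : Matrix (A1 × A2 × A3 × A4) (A1 × A2 × A3 × A4) ℂ) : Matrix A2 A2 ℂ :=
  fun b b' => ∑ a : A1, ∑ c : A3, ∑ d : A4, ρ (a, b, c, d) (a, b', c, d)

/-- Reduced density matrix `ρ_{A3}`. -/
def r3 (ρ : Matrix (A1 × A2 × A3 × A4) (A1 × A2 × A3 × A4) ℂ) : Matrix A3 A3 ℂ :=
  fun c c' => ∑ a : A1, ∑ b : A2, ∑ d : A4, ρ (a, b, c, d) (a, b, c', d)

/-- Reduced density matrix `ρ_{A1A2}`. -/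
def r12 (ρ : Matrix (A1 × A2 × A3 × A4) (A1 × A2 × A3 × A4) ℂ) :
    Matrix (A1 × A2) (A1 × A2) ℂ :=
  fun x y => ∑ c : A3, ∑ d : A4, ρ (x.1, x.2, c, d) (y.1, y.2, c, d)

/-- Reduced density matrix `ρ_{A1A3}`. -/
def r13 (ρ : Matrix (A1 × A2 × A3 × A4) (A1 × A2 × A3 × A4) ℂ) :
    Matrix (A1 × A3) (A1 × A3) ℂ :=
  fun x y => ∑ b : A2, ∑ d : A4, ρ (x.1, b, x.2, d) (y.1, b, y.2, d)

/-- Reduced density matrix `ρ_{A2A3}`. -/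
def r23 (ρ : Matrix (A1 × A2 × A3 × A4) (A1 × A2 × A3 × A4) ℂ) :
    Matrix (A2 × A3) (A2 × A3) ℂ :=
  fun x y => ∑ a : A1, ∑ d : A4, ρ (a, x.1, x.2, d) (a, y.1, y.2, d)

/-- Reduced density matrix `ρ_{A1A2A3}`. -/
def r123 (ρ : Matrix (A1 × A2 × A3 × A4) (A1 × A2 × A3 × A4) ℂ) :
    Matrix (A1 × A2 × A3) (A1 × A2 × A3) ℂ :=
  fun x y => ∑ d : A4, ρ (x.1, x.2.1, x.2.2, d) (y.1, y.2.1, y.2.2, d)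

/-- Reduced density matrix `ρ_{A1A2A4}`. -/
def r124 (ρ : Matrix (A1 × A2 × A3 × A4) (A1 × A2 × A3 × A4) ℂ) :
    Matrix (A1 × A2 × A4) (A1 × A2 × A4) ℂ :=
  fun x y => ∑ c : A3, ρ (x.1, x.2.1, c, x.2.2) (y.1, y.2.1, c, y.2.2)

/-- Reduced density matrix `ρ_{A1A3A4}`. -/
def r134 (ρ : Matrix (A1 × A2 × A3 × A4) (A1 × A2 × A3 × A4) ℂ) :
    Matrix (A1 × A3 × A4) (A1 × A3 × A4) ℂ :=
  fun x y => ∑ b : A2, ρ (x.1, b, x.2.1, x.2.2) (y.1, b, y.2.1, y.2.2)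

/-- Reduced density matrix `ρ_{A2A3A4}`. -/
def r234 (ρ : Matrix (A1 × A2 × A3 × A4) (A1 × A2 × A3 × A4) ℂ) :
    Matrix (A2 × A3 × A4) (A2 × A3 × A4) ℂ :=
  fun x y => ∑ a : A1, ρ (a, x) (a, y)

/-- The area `Area_{A1A2A3}`, built from conditional entropies
`S(X|Y) = S(ρ_XY) − S(ρ_Y)` conditioning inside the triple `A1A2A3`:
`Area = −[S(A1|A2A3)·S(A2|A1A3) + S(A1|A2A3)·S(A3|A1A2) + S(A2|A1A3)·S(A3|A1A2)]`. -/
def Area123 (ρ : Matrix (A1 × A2 × A3 × A4) (A1 × A2 × A3 × A4) ℂ) : ℝ :=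
  -((vN (r123 ρ) - vN (r23 ρ)) * (vN (r123 ρ) - vN (r13 ρ)) +
    (vN (r123 ρ) - vN (r23 ρ)) * (vN (r123 ρ) - vN (r12 ρ)) +
    (vN (r123 ρ) - vN (r13 ρ)) * (vN (r123 ρ) - vN (r12 ρ)))

/-- The area `Ãrea_{A1A2A3}`, built from conditional entropies conditioning on the whole
rest of the system:
`Ãrea = −[S(A1|A2A3A4)·S(A2|A1A3A4) + S(A1|A2A3A4)·S(A3|A1A2A4) + S(A2|A1A3A4)·S(A3|A1A2A4)]`. -/
def tArea123 (ρ : Matrix (A1 × A2 × A3 × A4) (A1 × A2 × A3 × A4) ℂ) : ℝ :=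
  -((vN ρ - vN (r234 ρ)) * (vN ρ - vN (r134 ρ)) +
    (vN ρ - vN (r234 ρ)) * (vN ρ - vN (r124 ρ)) +
    (vN ρ - vN (r134 ρ)) * (vN ρ - vN (r124 ρ)))

/-- The convoluted area `²M_{A1A2A3} = Area_{A1A2A3} − Ãrea_{A1A2A3}`. -/
def M2area (ρ : Matrix (A1 × A2 × A3 × A4) (A1 × A2 × A3 × A4) ℂ) : ℝ :=
  Area123 ρ - tArea123 ρ

end Quadripartite
/-- For any four-partite density matrix, the convoluted area satisfies the identity
`²M_{A1A2A3} = [I(A1;A2A3) + I(A3;A1A2A4) − S(ρ_{A1}) − S(ρ_{A3})]·I(A2;A4|A1A3)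
             + [I(A3;A1A2) + I(A2;A1A3A4) − S(ρ_{A3}) − S(ρ_{A2})]·I(A1;A4|A2A3)
             + [I(A2;A1A3) + I(A1;A2A3A4) − S(ρ_{A2}) − S(ρ_{A1})]·I(A3;A4|A1A2)`,
where `I(X;Y) = S(ρ_X) + S(ρ_Y) − S(ρ_XY)` and
`I(X;Z|Y) = S(ρ_XY) + S(ρ_YZ) − S(ρ_XYZ) − S(ρ_Y)`. -/
theorem convoluted_area_cmi_identity
    {A1 A2 A3 A4 : Type*} [Fintype A1] [Fintype A2] [Fintype A3] [Fintype A4]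
    [DecidableEq A1] [DecidableEq A2] [DecidableEq A3] [DecidableEq A4]
    (ρ : Matrix (A1 × A2 × A3 × A4) (A1 × A2 × A3 × A4) ℂ) (hρ : IsDensityMatrix ρ) :
    M2area ρ =
      ((vN (r1 ρ) + vN (r23 ρ) - vN (r123 ρ)) + (vN (r3 ρ) + vN (r124 ρ) - vN ρ) -
          vN (r1 ρ) - vN (r3 ρ)) *
        (vN (r123 ρ) + vN (r134 ρ) - vN ρ - vN (r13 ρ)) +
      ((vN (r3 ρ) + vN (r12 ρ) - vN (r123 ρ)) + (vN (r2 ρ) + vN (r134 ρ) - vN ρ) -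
          vN (r3 ρ) - vN (r2 ρ)) *
        (vN (r123 ρ) + vN (r234 ρ) - vN ρ - vN (r23 ρ)) +
      ((vN (r2 ρ) + vN (r13 ρ) - vN (r123 ρ)) + (vN (r1 ρ) + vN (r234 ρ) - vN ρ) -
          vN (r2 ρ) - vN (r1 ρ)) *
        (vN (r123 ρ) + vN (r124 ρ) - vN ρ - vN (r12 ρ)) := by
  unfold M2area Area123 tArea123; ring
end
end

section
/- (Ono's inequality, as used in the paper) Let a, b, c be nonnegative real numbers that are the side lengths of a non-obtuse triangle, i.e. a² + b² ≥ c², b² + c² ≥ a², and c² + a² ≥ b². Let F denote the area of the triangle, given by Heron's formula 16F² = 2a²b² + 2b²c² + 2c²a² − a⁴ − b⁴ − c⁴. Then 27·(a² + b² − c²)²·(a² + c² − b²)²·(c² + b² − a²)² ≤ (4F)⁶, i.e. 27·[(a² + b² − c²)(a² + c² − b²)(c² + b² − a²)]² ≤ (16F²)³. -/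
/-- AM-GM for three nonnegative reals: `27·p·q·r ≤ (p+q+r)³`. -/
lemma amgm3 (p q r : ℝ) (hp : 0 ≤ p) (hq : 0 ≤ q) (hr : 0 ≤ r) :
    27 * (p * q * r) ≤ (p + q + r) ^ 3 := by
  nlinarith [sq_nonneg (p - q), sq_nonneg (q - r), sq_nonneg (p - r),
    mul_nonneg hp hq, mul_nonneg hq hr, mul_nonneg hp hr,
    mul_nonneg (mul_nonneg hp hp) hq, mul_nonneg (mul_nonneg hq hq) hr,
    mul_nonneg (mul_nonneg hr hr) hp,
    mul_nonneg (mul_nonneg hp hq) hr]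

/-- **Ono's inequality** (as used in the paper). If `a, b, c ≥ 0` are the side lengths of a
non-obtuse triangle (`a² + b² ≥ c²`, `b² + c² ≥ a²`, `c² + a² ≥ b²`) and `F ≥ 0` is its
area, given by Heron's formula `16F² = 2a²b² + 2b²c² + 2c²a² − a⁴ − b⁴ − c⁴`, then
`27·(a² + b² − c²)²·(a² + c² − b²)²·(c² + b² − a²)² ≤ (4F)⁶`. -/
theorem ono_inequality (a b c F : ℝ)
    (ha : 0 ≤ a) (hb : 0 ≤ b) (hc : 0 ≤ c)
    (hab : a ^ 2 + b ^ 2 ≥ c ^ 2) (hbc : b ^ 2 + c ^ 2 ≥ a ^ 2) (hca : c ^ 2 + a ^ 2 ≥ b ^ 2)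
    (hF : 0 ≤ F)
    (heron : 16 * F ^ 2 =
      2 * a ^ 2 * b ^ 2 + 2 * b ^ 2 * c ^ 2 + 2 * c ^ 2 * a ^ 2 - a ^ 4 - b ^ 4 - c ^ 4) :
    27 * (a ^ 2 + b ^ 2 - c ^ 2) ^ 2 * (a ^ 2 + c ^ 2 - b ^ 2) ^ 2 *
      (c ^ 2 + b ^ 2 - a ^ 2) ^ 2 ≤ (4 * F) ^ 6 := by
  set x := a ^ 2 + b ^ 2 - c ^ 2 with hxdef
  set y := a ^ 2 + c ^ 2 - b ^ 2 with hydef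
  set z := c ^ 2 + b ^ 2 - a ^ 2 with hzdef
  have hx : 0 ≤ x := by simp [hxdef]; linarith
  have hy : 0 ≤ y := by simp [hydef]; linarith
  have hz : 0 ≤ z := by simp [hzdef]; linarith
  have h16 : 16 * F ^ 2 = x * y + y * z + z * x := by
    rw [heron, hxdef, hydef, hzdef]; ring
  have key : 27 * ((x * y) * (y * z) * (z * x)) ≤ (x * y + y * z + z * x) ^ 3 :=
    amgm3 _ _ _ (mul_nonneg hx hy) (mul_nonneg hy hz) (mul_nonneg hz hx)
  have h6 : (4 * F) ^ 6 = (16 * F ^ 2) ^ 3 := by ring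
  rw [h6, h16]
  nlinarith [key]
end
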